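/- The B-matrix M²_mCi = ⟨A_mCi, {I,T,t}, {f,I,T}⟩ is sufficiently expressive: every pair of distinct truth-values among {f,F,I,T,t} has a unary separator; in particular, the variable p separates the pairs (t,T) and (f,F) via the antidesignated set {f,I,T}, and each of the formulas ¬p and ∘p separates the pairs (I,t) and (I,T). -/
import Mathlib


/-- Formulas over the signature Σ with unary ¬, ∘ and binary ∧, ∨, →,
freely generated from a denumerable set of propositional variables. -/
inductive Fm : Type where
  | var : ℕ → Fm
  | neg : Fm → Fm
  | circ : Fm → Fm
  | conj : Fm → Fm → Fm
  | disj : Fm → Fm → Fm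
  | imp : Fm → Fm → Fm
deriving DecidableEq

/-- Substitutions act homomorphically on formulas. -/
def subst (σ : ℕ → Fm) : Fm → Fm
  | .var n => σ n
  | .neg φ => .neg (subst σ φ)
  | .circ φ => .circ (subst σ φ)
  | .conj φ ψ => .conj (subst σ φ) (subst σ ψ)
  | .disj φ ψ => .disj (subst σ φ) (subst σ ψ)
  | .imp φ ψ => .imp (subst σ φ) (subst σ ψ)

/-- A Set-Fmla rule schema: a finite antecedent and a single succedent formula. -/
abbrev Rule : Type := Finset Fm × Fm

/-- Derivability in a Set-Fmla Hilbert system: `Derives H Γ φ` holds iff φ can be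
obtained from members of Γ by finitely many applications of substitution instances
of rules of `H`. -/
inductive Derives (H : Set Rule) : Set Fm → Fm → Prop where
  | prem : ∀ {Γ : Set Fm} {φ : Fm}, φ ∈ Γ → Derives H Γ φ
  | rule : ∀ {Γ : Set Fm} (r : Rule) (σ : ℕ → Fm), r ∈ H →
      (∀ ψ ∈ r.1, Derives H Γ (subst σ ψ)) → Derives H Γ (subst σ r.2)

/-- The five truth-values of the nd-matrix M_mCi. -/
inductive V5 : Type where
  | f | F | I | T | t
deriving DecidableEq

/-- The designated values D₅ = {I, T, t}. -/
def D5 : Set V5 := {x | x = V5.I ∨ x = V5.T ∨ x = V5.t}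

instance (x : V5) : Decidable (x ∈ D5) :=
  inferInstanceAs (Decidable (x = V5.I ∨ x = V5.T ∨ x = V5.t))

/-- Non-deterministic conjunction of M_mCi. -/
def nAnd (x y : V5) : Set V5 :=
  if x ∈ D5 ∧ y ∈ D5 then {V5.I, V5.t} else {V5.f}
/-- Non-deterministic disjunction of M_mCi. -/
def nOr (x y : V5) : Set V5 :=
  if x ∈ D5 ∨ y ∈ D5 then {V5.I, V5.t} else {V5.f}
/-- Non-deterministic implication of M_mCi. -/
def nImp (x y : V5) : Set V5 :=
  if x ∉ D5 ∨ y ∈ D5 then {V5.I, V5.t} else {V5.f}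
/-- Non-deterministic negation of M_mCi. -/
def nNeg : V5 → Set V5
  | V5.f => {V5.I, V5.t}
  | V5.F => {V5.T}
  | V5.I => {V5.I, V5.t}
  | V5.T => {V5.F}
  | V5.t => {V5.f}
/-- Non-deterministic consistency operator of M_mCi. -/
def nCirc : V5 → Set V5
  | V5.I => {V5.F}
  | _ => {V5.T}

/-- Valuations on the nd-matrix M_mCi. -/
def IsVal5 (v : Fm → V5) : Prop :=
  (∀ φ ψ : Fm, v (.conj φ ψ) ∈ nAnd (v φ) (v ψ)) ∧
  (∀ φ ψ : Fm, v (.disj φ ψ) ∈ nOr (v φ) (v ψ)) ∧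
  (∀ φ ψ : Fm, v (.imp φ ψ) ∈ nImp (v φ) (v ψ)) ∧
  (∀ φ : Fm, v (.neg φ) ∈ nNeg (v φ)) ∧
  (∀ φ : Fm, v (.circ φ) ∈ nCirc (v φ))

/-- The Set-Set entailment relation ⊩ determined by M_mCi. -/
def Ent5 (Γ Δ : Set Fm) : Prop :=
  ∀ v : Fm → V5, IsVal5 v → (∀ φ ∈ Γ, v φ ∈ D5) → ∃ δ ∈ Δ, v δ ∈ D5

/-- The set of propositional variables occurring in a formula. -/
def fvars : Fm → Set ℕ
  | .var n => {n}
  | .neg φ => fvars φ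
  | .circ φ => fvars φ
  | .conj φ ψ => fvars φ ∪ fvars ψ
  | .disj φ ψ => fvars φ ∪ fvars ψ
  | .imp φ ψ => fvars φ ∪ fvars ψ

/-- Unary formulas: formulas over the single variable `var 0`. -/
def UnaryFm (ψ : Fm) : Prop := fvars ψ ⊆ {0}

/-- ψ^A(x): the set of values taken by the unary formula ψ over valuations
assigning `x` to the variable `var 0`. -/
def fmlImage (ψ : Fm) (x : V5) : Set V5 :=
  {w | ∃ v : Fm → V5, IsVal5 v ∧ v (.var 0) = x ∧ v ψ = w}

/-- ψ separates (x,y) with respect to the distinguished set `D`: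
ψ^A(x) ⊆ D and ψ^A(y) ⊆ V∖D, or vice versa. -/
def SepBy (D : Set V5) (ψ : Fm) (x y : V5) : Prop :=
  (fmlImage ψ x ⊆ D ∧ fmlImage ψ y ⊆ Dᶜ) ∨
  (fmlImage ψ y ⊆ D ∧ fmlImage ψ x ⊆ Dᶜ)

/-- The antidesignated values {f, I, T} of the B-matrix M²_mCi. -/
def R5 : Set V5 := {x | x = V5.f ∨ x = V5.I ∨ x = V5.T}


lemma img_var (x : V5) : fmlImage (.var 0) x ⊆ {x} := by
  rintro w ⟨v, _, hv, rfl⟩; simp [hv]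

lemma img_neg (x : V5) : fmlImage (.neg (.var 0)) x ⊆ nNeg x := by
  rintro w ⟨v, hv, h0, rfl⟩
  have := hv.2.2.2.1 (.var 0); rwa [h0] at this

lemma img_circ (x : V5) : fmlImage (.circ (.var 0)) x ⊆ nCirc x := by
  rintro w ⟨v, hv, h0, rfl⟩
  have := hv.2.2.2.2 (.var 0); rwa [h0] at this

lemma sep_var (D : Set V5) (x y : V5) (hx : x ∈ D) (hy : y ∉ D) :
    SepBy D (.var 0) x y :=
  Or.inl ⟨(img_var x).trans (Set.singleton_subset_iff.2 hx),
    (img_var y).trans (Set.singleton_subset_iff.2 hy)⟩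

lemma unary_var : UnaryFm (.var 0) := by intro n h; simpa [fvars] using h

lemma unary_neg : UnaryFm (.neg (.var 0)) := by intro n h; simpa [fvars] using h

lemma unary_circ : UnaryFm (.circ (.var 0)) := by intro n h; simpa [fvars] using h

lemma sep_neg (D : Set V5) (x y : V5) (hx : nNeg x ⊆ D) (hy : nNeg y ⊆ Dᶜ) :
    SepBy D (.neg (.var 0)) x y :=
  Or.inl ⟨(img_neg x).trans hx, (img_neg y).trans hy⟩

lemma sep_circ (D : Set V5) (x y : V5) (hx : nCirc x ⊆ D) (hy : nCirc y ⊆ Dᶜ) :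
    SepBy D (.circ (.var 0)) x y :=
  Or.inl ⟨(img_circ x).trans hx, (img_circ y).trans hy⟩

lemma sepby_symm {D : Set V5} {ψ : Fm} {x y : V5} (h : SepBy D ψ x y) :
    SepBy D ψ y x := h.symm

/-- the B-matrix M²_mCi = ⟨A_mCi, {I,T,t}, {f,I,T}⟩ is sufficiently
expressive; in particular p separates (t,T) and (f,F) via the antidesignated set,
and each of ¬p and ∘p separates (I,t) and (I,T). -/
theorem stmt19 :
    (∀ x y : V5, x ≠ y →
      ∃ ψ : Fm, UnaryFm ψ ∧ (SepBy D5 ψ x y ∨ SepBy R5 ψ x y)) ∧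
    SepBy R5 (.var 0) V5.t V5.T ∧
    SepBy R5 (.var 0) V5.f V5.F ∧
    (SepBy D5 (.neg (.var 0)) V5.I V5.t ∨ SepBy R5 (.neg (.var 0)) V5.I V5.t) ∧
    (SepBy D5 (.neg (.var 0)) V5.I V5.T ∨ SepBy R5 (.neg (.var 0)) V5.I V5.T) ∧
    (SepBy D5 (.circ (.var 0)) V5.I V5.t ∨ SepBy R5 (.circ (.var 0)) V5.I V5.t) ∧
    (SepBy D5 (.circ (.var 0)) V5.I V5.T ∨ SepBy R5 (.circ (.var 0)) V5.I V5.T) := by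
  have hD : ∀ x y : V5, x ∈ D5 → y ∉ D5 → ∃ ψ : Fm,
      UnaryFm ψ ∧ (SepBy D5 ψ x y ∨ SepBy R5 ψ x y) :=
    fun x y hx hy => ⟨.var 0, unary_var, Or.inl (sep_var D5 x y hx hy)⟩
  have hR : ∀ x y : V5, x ∈ R5 → y ∉ R5 → ∃ ψ : Fm,
      UnaryFm ψ ∧ (SepBy D5 ψ x y ∨ SepBy R5 ψ x y) :=
    fun x y hx hy => ⟨.var 0, unary_var, Or.inr (sep_var R5 x y hx hy)⟩
  have hC : ∀ y : V5, y ≠ V5.I → ∃ ψ : Fm,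
      UnaryFm ψ ∧ (SepBy D5 ψ y V5.I ∨ SepBy R5 ψ y V5.I) := by
    intro y hy
    refine ⟨.circ (.var 0), unary_circ, Or.inl (sep_circ D5 y V5.I ?_ ?_)⟩
    · cases y <;> simp_all [nCirc, D5]
    · simp only [nCirc]; rintro w rfl; simp [D5]
  refine ⟨?_, ?_, ?_, ?_, ?_, ?_, ?_⟩
  · intro x y hxy
    have sw : ∀ x y : V5, (∃ ψ : Fm, UnaryFm ψ ∧ (SepBy D5 ψ x y ∨ SepBy R5 ψ x y)) →
        ∃ ψ : Fm, UnaryFm ψ ∧ (SepBy D5 ψ y x ∨ SepBy R5 ψ y x) := by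
      rintro x y ⟨ψ, h1, h2 | h2⟩
      exacts [⟨ψ, h1, Or.inl h2.symm⟩, ⟨ψ, h1, Or.inr h2.symm⟩]
    cases x <;> cases y
    · exact absurd rfl hxy
    · exact hR _ _ (by simp [R5]) (by simp [R5])
    · exact sw _ _ (hD _ _ (by simp [D5]) (by simp [D5]))
    · exact sw _ _ (hD _ _ (by simp [D5]) (by simp [D5]))
    · exact sw _ _ (hD _ _ (by simp [D5]) (by simp [D5]))
    · exact sw _ _ (hR _ _ (by simp [R5]) (by simp [R5]))
    · exact absurd rfl hxy
    · exact sw _ _ (hD _ _ (by simp [D5]) (by simp [D5]))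
    · exact sw _ _ (hD _ _ (by simp [D5]) (by simp [D5]))
    · exact sw _ _ (hD _ _ (by simp [D5]) (by simp [D5]))
    · exact hD _ _ (by simp [D5]) (by simp [D5])
    · exact hD _ _ (by simp [D5]) (by simp [D5])
    · exact absurd rfl hxy
    · exact sw _ _ (hC V5.T (by simp))
    · exact sw _ _ (hC V5.t (by simp))
    · exact hD _ _ (by simp [D5]) (by simp [D5])
    · exact hD _ _ (by simp [D5]) (by simp [D5])
    · exact hC V5.T (by simp)
    · exact absurd rfl hxy
    · exact hR _ _ (by simp [R5]) (by simp [R5])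
    · exact hD _ _ (by simp [D5]) (by simp [D5])
    · exact hD _ _ (by simp [D5]) (by simp [D5])
    · exact hC V5.t (by simp)
    · exact sw _ _ (hR _ _ (by simp [R5]) (by simp [R5]))
    · exact absurd rfl hxy
  · exact (sep_var R5 V5.T V5.t (by simp [R5]) (by simp [R5])).symm
  · exact sep_var R5 V5.f V5.F (by simp [R5]) (by simp [R5])
  · refine Or.inl (sep_neg D5 V5.I V5.t ?_ ?_)
    · simp only [nNeg]; rintro w (rfl | rfl) <;> simp [D5]
    · simp only [nNeg]; rintro w rfl; simp [D5]
  · refine Or.inl (sep_neg D5 V5.I V5.T ?_ ?_)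
    · simp only [nNeg]; rintro w (rfl | rfl) <;> simp [D5]
    · simp only [nNeg]; rintro w rfl; simp [D5]
  · refine Or.inl ((sep_circ D5 V5.t V5.I ?_ ?_).symm)
    · simp only [nCirc]; rintro w rfl; simp [D5]
    · simp only [nCirc]; rintro w rfl; simp [D5]
  · refine Or.inl ((sep_circ D5 V5.T V5.I ?_ ?_).symm)
    · simp only [nCirc]; rintro w rfl; simp [D5]
    · simp only [nCirc]; rintro w rfl; simp [D5]
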